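/- arXiv:math/0006048 — 2 statements merged into one kernel-verified Lean document; each statement's English description precedes it below -/
import Mathlib

section
/- Let A be a bialgebra and M, N objects of the category A_{lr}^r (bimodules over A that are simultaneously left-right and right-right Hopf modules). Endow A^n⊗M with the right A-module structure (a^1⊗...⊗a^n⊗m)·b = a^1⊗...⊗a^n⊗(m·b), and N⊗A^p with the right A-module structure (x⊗a^1⊗...⊗a^p)·b = Σ x·b_1 ⊗ a^1 b_2 ⊗...⊗ a^p b_{p+1}. Then the subspaces R^{n,p}(M,N) = Hom_{mod-A}(A^n⊗M, N⊗A^p) of right A-module maps are preserved by the differentials of the Hopf-module bicomplex: d_m^{n,p}(R^{n,p}(M,N)) ⊆ R^{n+1,p}(M,N) and d_c^{n,p}(R^{n,p}(M,N)) ⊆ R^{n,p+1}(M,N), so (R^{n,p}(M,N), d_m, d_c) is a double complex. -/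
open TensorProduct
noncomputable section

namespace PS

variable (k : Type) [Field k] (A : Type) [Ring A] [Bialgebra k A]

/-- Left-nested tensor powers with base `B`: `pwr B n = B ⊗ A ⊗ ⋯ ⊗ A` (`n` copies of `A`). -/
def pwr (B : ModuleCat k) : ℕ → ModuleCat k
  | 0 => B
  | n + 1 => ModuleCat.of k (pwr B n ⊗[k] A)

/-- `A^{⊗ n}` realized as `pwr k n`, i.e. `k ⊗ A ⊗ ⋯ ⊗ A`. -/
abbrev Pk (n : ℕ) : ModuleCat k := pwr k A (ModuleCat.of k k) n

abbrev μA : A ⊗[k] A →ₗ[k] A := LinearMap.mul' k A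
abbrev ΔA : A →ₗ[k] A ⊗[k] A := Coalgebra.comul
abbrev εA : A →ₗ[k] k := Coalgebra.counit

/-- Multiplication of the tensorands in slots `i` and `i+1` (`1 ≤ i ≤ n`);
junk (zero map) for other `i`. -/
def mulP : (n : ℕ) → (i : ℕ) → ((Pk k A (n+1) : Type) →ₗ[k] Pk k A n)
  | 0, _ => 0
  | n + 1, i =>
      if i = n + 1 then
        (TensorProduct.map (LinearMap.id : (Pk k A n : Type) →ₗ[k] Pk k A n) (μA k A)).comp
          (TensorProduct.assoc k (Pk k A n) A A).toLinearMap
      else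
        TensorProduct.map (mulP n i) (LinearMap.id : A →ₗ[k] A)

/-- Insert an `A`-factor at the innermost slot (slot 1). -/
def insP : (n : ℕ) → (A ⊗[k] (Pk k A n : Type)) ≃ₗ[k] (Pk k A (n+1) : Type)
  | 0 => TensorProduct.comm k A k
  | n + 1 =>
      (TensorProduct.assoc k A (Pk k A n) A).symm.trans
        (TensorProduct.congr (insP n) (LinearEquiv.refl k A))

section NM

variable {N : Type} [AddCommGroup N] [Module k N]

/-- The left diagonal action of `A` on `N ⊗ A^{⊗ p}` built from a base action `ωN`. -/
def ldiag (ωN : A ⊗[k] N →ₗ[k] N) :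
    (p : ℕ) → (A ⊗[k] (pwr k A (ModuleCat.of k N) p : Type) →ₗ[k] pwr k A (ModuleCat.of k N) p)
  | 0 => ωN
  | p + 1 =>
      (TensorProduct.map (ldiag ωN p) (μA k A)).comp <|
        ((TensorProduct.tensorTensorTensorComm k A A
            (pwr k A (ModuleCat.of k N) p : Type) A).toLinearMap).comp
          (TensorProduct.map (ΔA k A) (LinearMap.id :
            ((pwr k A (ModuleCat.of k N) p : Type) ⊗[k] A) →ₗ[k] _))

/-- Right diagonal multiplication on the `A`-slots of `N ⊗ A^{⊗ p}` (counit on the base). -/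
def rdiagE : (p : ℕ) →
    ((pwr k A (ModuleCat.of k N) p : Type) ⊗[k] A →ₗ[k] pwr k A (ModuleCat.of k N) p)
  | 0 => (TensorProduct.rid k N).toLinearMap.comp
      (TensorProduct.map (LinearMap.id : N →ₗ[k] N) (εA k A))
  | p + 1 =>
      (TensorProduct.map (rdiagE p) (μA k A)).comp <|
        ((TensorProduct.tensorTensorTensorComm k
            (pwr k A (ModuleCat.of k N) p : Type) A A A).toLinearMap).comp
          (TensorProduct.map
            (LinearMap.id : ((pwr k A (ModuleCat.of k N) p : Type) ⊗[k] A) →ₗ[k] _) (ΔA k A))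

/-- Right diagonal action on `N ⊗ A^{⊗ p}` built from a base (right) action `ωNr`. -/
def rdiagAct (ωNr : N ⊗[k] A →ₗ[k] N) : (p : ℕ) →
    ((pwr k A (ModuleCat.of k N) p : Type) ⊗[k] A →ₗ[k] pwr k A (ModuleCat.of k N) p)
  | 0 => ωNr
  | p + 1 =>
      (TensorProduct.map (rdiagAct ωNr p) (μA k A)).comp <|
        ((TensorProduct.tensorTensorTensorComm k
            (pwr k A (ModuleCat.of k N) p : Type) A A A).toLinearMap).comp
          (TensorProduct.map
            (LinearMap.id : ((pwr k A (ModuleCat.of k N) p : Type) ⊗[k] A) →ₗ[k] _) (ΔA k A))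

end NM

/-- `dL : A^{⊗ n} → A ⊗ A^{⊗ n}`, `a^1 ⊗ ⋯ ⊗ a^n ↦ Σ (a^1)_1 ⋯ (a^n)_1 ⊗ ((a^1)_2 ⊗ ⋯ ⊗ (a^n)_2)`. -/
def dL : (n : ℕ) → ((Pk k A n : Type) →ₗ[k] A ⊗[k] (Pk k A n : Type))
  | 0 => (TensorProduct.map (Algebra.linearMap k A) (LinearMap.id : k →ₗ[k] k)).comp
      (TensorProduct.lid k k).symm.toLinearMap
  | n + 1 =>
      (TensorProduct.map (μA k A)
          (LinearMap.id : ((Pk k A n : Type) ⊗[k] A) →ₗ[k] _)).comp <|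
        ((TensorProduct.tensorTensorTensorComm k A (Pk k A n : Type) A A).toLinearMap).comp
          (TensorProduct.map (dL n) (ΔA k A))

/-- `dR : A^{⊗ n} → A^{⊗ n} ⊗ A`, `a^1 ⊗ ⋯ ⊗ a^n ↦ Σ ((a^1)_1 ⊗ ⋯ ⊗ (a^n)_1) ⊗ (a^1)_2 ⋯ (a^n)_2`. -/
def dR : (n : ℕ) → ((Pk k A n : Type) →ₗ[k] (Pk k A n : Type) ⊗[k] A)
  | 0 => (TensorProduct.map (LinearMap.id : k →ₗ[k] k) (Algebra.linearMap k A)).comp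
      (TensorProduct.rid k k).symm.toLinearMap
  | n + 1 =>
      (TensorProduct.map
          (LinearMap.id : ((Pk k A n : Type) ⊗[k] A) →ₗ[k] _) (μA k A)).comp <|
        ((TensorProduct.tensorTensorTensorComm k (Pk k A n : Type) A A A).toLinearMap).comp
          (TensorProduct.map (dR n) (ΔA k A))

section Base

variable {N : Type} [AddCommGroup N] [Module k N]

/-- Apply `ρN : N → N ⊗ A` to the base of `N ⊗ A^{⊗ p}`. -/
def rhoBase (ρN : N →ₗ[k] N ⊗[k] A) : (p : ℕ) →
    ((pwr k A (ModuleCat.of k N) p : Type) →ₗ[k] pwr k A (ModuleCat.of k (N ⊗[k] A)) p)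
  | 0 => ρN
  | p + 1 => TensorProduct.map (rhoBase ρN p) (LinearMap.id : A →ₗ[k] A)

/-- Reinterpret `(N ⊗ A) ⊗ A^{⊗ p}` as `N ⊗ A^{⊗ (p+1)}`. -/
def shiftB : (p : ℕ) →
    ((pwr k A (ModuleCat.of k (N ⊗[k] A)) p : Type) ≃ₗ[k] pwr k A (ModuleCat.of k N) (p+1))
  | 0 => LinearEquiv.refl k (N ⊗[k] A)
  | p + 1 => TensorProduct.congr (shiftB p) (LinearEquiv.refl k A)

/-- Multiply the `A`-component of the base `N ⊗ A` on the right by an element of `A`. -/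
def rmulBase : (p : ℕ) →
    ((pwr k A (ModuleCat.of k (N ⊗[k] A)) p : Type) ⊗[k] A →ₗ[k]
      pwr k A (ModuleCat.of k (N ⊗[k] A)) p)
  | 0 => (TensorProduct.map (LinearMap.id : N →ₗ[k] N) (μA k A)).comp
      (TensorProduct.assoc k N A A).toLinearMap
  | p + 1 =>
      (TensorProduct.map (rmulBase p) (LinearMap.id : A →ₗ[k] A)).comp <|
        ((TensorProduct.assoc k (pwr k A (ModuleCat.of k (N ⊗[k] A)) p : Type) A A).symm.toLinearMap).comp <|
          (TensorProduct.map
            (LinearMap.id : (pwr k A (ModuleCat.of k (N ⊗[k] A)) p : Type) →ₗ[k] _)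
            (TensorProduct.comm k A A).toLinearMap).comp
            (TensorProduct.assoc k
              (pwr k A (ModuleCat.of k (N ⊗[k] A)) p : Type) A A).toLinearMap

/-- Apply the counit to the `A`-component of the base `N ⊗ A`. -/
def epsBase : (p : ℕ) →
    ((pwr k A (ModuleCat.of k (N ⊗[k] A)) p : Type) →ₗ[k] pwr k A (ModuleCat.of k N) p)
  | 0 => (TensorProduct.rid k N).toLinearMap.comp
      (TensorProduct.map (LinearMap.id : N →ₗ[k] N) (εA k A))
  | p + 1 => TensorProduct.map (epsBase p) (LinearMap.id : A →ₗ[k] A)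

/-- Apply `Δ` on the `i`-th `A`-slot (`1 ≤ i ≤ p`) of `N ⊗ A^{⊗ p}`; junk otherwise. -/
def comulAt : (p : ℕ) → (i : ℕ) →
    ((pwr k A (ModuleCat.of k N) p : Type) →ₗ[k] pwr k A (ModuleCat.of k N) (p+1))
  | 0, _ => 0
  | p + 1, i =>
      if i = p + 1 then
        ((TensorProduct.assoc k (pwr k A (ModuleCat.of k N) p : Type) A A).symm.toLinearMap).comp
          (TensorProduct.map
            (LinearMap.id : (pwr k A (ModuleCat.of k N) p : Type) →ₗ[k] _) (ΔA k A))
      else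
        TensorProduct.map (comulAt p i) (LinearMap.id : A →ₗ[k] A)

/-- Left coaction on `N ⊗ A^{⊗ p}` coming from a left coaction on the base. -/
def lcoBase (ρNl : N →ₗ[k] A ⊗[k] N) : (p : ℕ) →
    ((pwr k A (ModuleCat.of k N) p : Type) →ₗ[k]
      A ⊗[k] (pwr k A (ModuleCat.of k N) p : Type))
  | 0 => ρNl
  | p + 1 =>
      ((TensorProduct.assoc k A (pwr k A (ModuleCat.of k N) p : Type) A).toLinearMap).comp
        (TensorProduct.map (lcoBase ρNl p) (LinearMap.id : A →ₗ[k] A))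

end Base

section Bicomplex

variable {M N : Type} [AddCommGroup M] [Module k M] [AddCommGroup N] [Module k N]

/-- `A^{⊗ n} ⊗ M`, the domain of the `(n,p)` cochains. -/
abbrev Dm (M : Type) [AddCommGroup M] [Module k M] (n : ℕ) : Type :=
  (Pk k A n : Type) ⊗[k] M

/-- `N ⊗ A^{⊗ p}`. -/
abbrev Cd (N : Type) [AddCommGroup N] [Module k N] (p : ℕ) : Type :=
  (pwr k A (ModuleCat.of k N) p : Type)

/-- The space of `(n,p)` cochains `Hom(A^{⊗ n} ⊗ M, N ⊗ A^{⊗ p})`. -/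
abbrev Yc (M N : Type) [AddCommGroup M] [Module k M] [AddCommGroup N] [Module k N]
    (n p : ℕ) : Type := Dm k A M n →ₗ[k] Cd k A N p

variable (ωM : A ⊗[k] M →ₗ[k] M) (ρM : M →ₗ[k] M ⊗[k] A)
variable (ωN : A ⊗[k] N →ₗ[k] N) (ρN : N →ₗ[k] N ⊗[k] A)

/-- `b_0`: the face using the diagonal left action of `a^1` on `N ⊗ A^{⊗ p}`. -/
def face0 (n p : ℕ) (f : Yc k A M N n p) : Yc k A M N (n+1) p :=
  (ldiag k A ωN p).comp <|
    (TensorProduct.map (LinearMap.id : A →ₗ[k] A) f).comp <|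
      ((TensorProduct.assoc k A (Pk k A n : Type) M).toLinearMap).comp
        (TensorProduct.map (insP k A n).symm.toLinearMap (LinearMap.id : M →ₗ[k] M))

/-- `b_i`, `1 ≤ i ≤ n`: multiply the adjacent arguments `a^i a^{i+1}`. -/
def faceMid (n p : ℕ) (i : ℕ) (f : Yc k A M N n p) : Yc k A M N (n+1) p :=
  f.comp (TensorProduct.map (mulP k A n i) (LinearMap.id : M →ₗ[k] M))

/-- `b_{n+1}` in the Hopf-module case: `f(a^1 ⊗ ⋯ ⊗ a^n ⊗ a^{n+1}·m)`. -/
def faceLastH (n p : ℕ) (f : Yc k A M N n p) : Yc k A M N (n+1) p :=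
  f.comp <|
    (TensorProduct.map (LinearMap.id : (Pk k A n : Type) →ₗ[k] _) ωM).comp
      (TensorProduct.assoc k (Pk k A n : Type) A M).toLinearMap

/-- `b_{n+1}` in the Yetter-Drinfel'd case. -/
def faceLastYD (n p : ℕ) (f : Yc k A M N n p) : Yc k A M N (n+1) p :=
  (rdiagE k A p).comp <|
    ((TensorProduct.comm k A (Cd k A N p)).toLinearMap).comp <|
      (TensorProduct.map (LinearMap.id : A →ₗ[k] A)
        (f.comp (TensorProduct.map (LinearMap.id : (Pk k A n : Type) →ₗ[k] _) ωM))).comp <|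
        ((TensorProduct.leftComm k (Pk k A n : Type) A (A ⊗[k] M)).toLinearMap).comp <|
          (TensorProduct.map (LinearMap.id : (Pk k A n : Type) →ₗ[k] _)
            (TensorProduct.assoc k A A M).toLinearMap).comp <|
            ((TensorProduct.assoc k (Pk k A n : Type) (A ⊗[k] A) M).toLinearMap).comp
              (TensorProduct.map
                (TensorProduct.map (LinearMap.id : (Pk k A n : Type) →ₗ[k] _) (ΔA k A))
                (LinearMap.id : M →ₗ[k] M))

/-- The Yetter-Drinfel'd horizontal faces `b_i^{n,p}`, `0 ≤ i ≤ n+1`. -/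
def bYD (n p : ℕ) (i : ℕ) (f : Yc k A M N n p) : Yc k A M N (n+1) p :=
  if i = 0 then face0 k A ωN n p f
  else if i ≤ n then faceMid k A n p i f
  else faceLastYD k A ωM n p f

/-- The Hopf-module horizontal faces `b_i^{n,p}`, `0 ≤ i ≤ n+1`. -/
def bH (n p : ℕ) (i : ℕ) (f : Yc k A M N n p) : Yc k A M N (n+1) p :=
  if i = 0 then face0 k A ωN n p f
  else if i ≤ n then faceMid k A n p i f
  else faceLastH k A ωM n p f

/-- `c_0` in the Hopf-module case: apply `ρ_N` to the `N`-component of the output. -/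
def cof0H (n p : ℕ) (f : Yc k A M N n p) : Yc k A M N n (p+1) :=
  ((shiftB k A p).toLinearMap).comp ((rhoBase k A ρN p).comp f)

/-- `c_0` in the Yetter-Drinfel'd case. -/
def cof0YD (n p : ℕ) (f : Yc k A M N n p) : Yc k A M N n (p+1) :=
  ((shiftB k A p).toLinearMap).comp <|
    (rmulBase k A p).comp <|
      ((TensorProduct.comm k A
          (pwr k A (ModuleCat.of k (N ⊗[k] A)) p : Type)).toLinearMap).comp <|
        (TensorProduct.map (LinearMap.id : A →ₗ[k] A) ((rhoBase k A ρN p).comp f)).comp <|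
          ((TensorProduct.assoc k A (Pk k A n : Type) M).toLinearMap).comp
            (TensorProduct.map (dL k A n) (LinearMap.id : M →ₗ[k] M))

/-- `c_{p+1}`: uses the right comodule structure of `M`. -/
def cofLast (n p : ℕ) (f : Yc k A M N n p) : Yc k A M N n (p+1) :=
  (TensorProduct.map f (μA k A)).comp <|
    ((TensorProduct.tensorTensorTensorComm k (Pk k A n : Type) A M A).toLinearMap).comp
      (TensorProduct.map (dR k A n) ρM)

/-- The Yetter-Drinfel'd vertical cofaces `c_j^{n,p}`, `0 ≤ j ≤ p+1`. -/
def cYD (n p : ℕ) (j : ℕ) (f : Yc k A M N n p) : Yc k A M N n (p+1) :=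
  if j = 0 then cof0YD k A ρN n p f
  else if j ≤ p then (comulAt k A p j).comp f
  else cofLast k A ρM n p f

/-- The Hopf-module vertical cofaces `c_j^{n,p}`, `0 ≤ j ≤ p+1`. -/
def cH (n p : ℕ) (j : ℕ) (f : Yc k A M N n p) : Yc k A M N n (p+1) :=
  if j = 0 then cof0H k A ρN n p f
  else if j ≤ p then (comulAt k A p j).comp f
  else cofLast k A ρM n p f

/-- The horizontal differential (Yetter-Drinfel'd case). -/
def dmYD (n p : ℕ) (f : Yc k A M N n p) : Yc k A M N (n+1) p :=
  ∑ i ∈ Finset.range (n+2), ((-1 : ℤ)^i) • bYD k A ωM ωN n p i f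

/-- The vertical differential (Yetter-Drinfel'd case). -/
def dcYD (n p : ℕ) (f : Yc k A M N n p) : Yc k A M N n (p+1) :=
  ∑ j ∈ Finset.range (p+2), ((-1 : ℤ)^j) • cYD k A ρM ρN n p j f

/-- The horizontal differential (Hopf-module case). -/
def dmH (n p : ℕ) (f : Yc k A M N n p) : Yc k A M N (n+1) p :=
  ∑ i ∈ Finset.range (n+2), ((-1 : ℤ)^i) • bH k A ωM ωN n p i f

/-- The vertical differential (Hopf-module case). -/
def dcH (n p : ℕ) (f : Yc k A M N n p) : Yc k A M N n (p+1) :=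
  ∑ j ∈ Finset.range (p+2), ((-1 : ℤ)^j) • cH k A ρM ρN n p j f

end Bicomplex

section Structures

variable {M : Type} [AddCommGroup M] [Module k M]

/-- `(M, ωM)` is a left `A`-module. -/
def IsModule (ωM : A ⊗[k] M →ₗ[k] M) : Prop :=
  (∀ m : M, ωM ((1 : A) ⊗ₜ m) = m) ∧
  ∀ (a b : A) (m : M), ωM (a ⊗ₜ ωM (b ⊗ₜ m)) = ωM ((a * b) ⊗ₜ m)

/-- `(M, ρM)` is a right `A`-comodule. -/
def IsComodule (ρM : M →ₗ[k] M ⊗[k] A) : Prop :=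
  ((TensorProduct.rid k M).toLinearMap.comp
      ((TensorProduct.map (LinearMap.id : M →ₗ[k] M) (εA k A)).comp ρM) = LinearMap.id) ∧
  (TensorProduct.map ρM (LinearMap.id : A →ₗ[k] A)).comp ρM =
    ((TensorProduct.assoc k M A A).symm.toLinearMap).comp
      ((TensorProduct.map (LinearMap.id : M →ₗ[k] M) (ΔA k A)).comp ρM)

/-- The map `a ⊗ m ↦ Σ a_1·m_0 ⊗ a_2 m_1`. -/
def hopfRHS (ωM : A ⊗[k] M →ₗ[k] M) (ρM : M →ₗ[k] M ⊗[k] A) :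
    A ⊗[k] M →ₗ[k] M ⊗[k] A :=
  (TensorProduct.map ωM (μA k A)).comp <|
    ((TensorProduct.tensorTensorTensorComm k A A M A).toLinearMap).comp
      (TensorProduct.map (ΔA k A) ρM)

/-- The map `a ⊗ m ↦ Σ (a_2·m)_0 ⊗ (a_2·m)_1 a_1`. -/
def ydLHS (ωM : A ⊗[k] M →ₗ[k] M) (ρM : M →ₗ[k] M ⊗[k] A) :
    A ⊗[k] M →ₗ[k] M ⊗[k] A :=
  (TensorProduct.map (LinearMap.id : M →ₗ[k] M) (μA k A)).comp <|
    ((TensorProduct.assoc k M A A).toLinearMap).comp <|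
      ((TensorProduct.comm k A (M ⊗[k] A)).toLinearMap).comp <|
        (TensorProduct.map (LinearMap.id : A →ₗ[k] A) (ρM.comp ωM)).comp <|
          ((TensorProduct.assoc k A A M).toLinearMap).comp
            (TensorProduct.map (ΔA k A) (LinearMap.id : M →ₗ[k] M))

/-- `(M, ωM, ρM)` is a left-right Yetter-Drinfel'd module over `A`. -/
def IsYetterDrinfeld (ωM : A ⊗[k] M →ₗ[k] M) (ρM : M →ₗ[k] M ⊗[k] A) : Prop :=
  IsModule k A ωM ∧ IsComodule k A ρM ∧
    ydLHS k A ωM ρM = hopfRHS k A ωM ρM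

/-- `(M, ωM, ρM)` is a left-right Hopf module over `A`. -/
def IsHopfModule (ωM : A ⊗[k] M →ₗ[k] M) (ρM : M →ₗ[k] M ⊗[k] A) : Prop :=
  IsModule k A ωM ∧ IsComodule k A ρM ∧
    ρM.comp ωM = hopfRHS k A ωM ρM

end Structures


section Bimod

variable (k : Type) [Field k] (A : Type) [Ring A] [Bialgebra k A]
variable {M N : Type} [AddCommGroup M] [Module k M] [AddCommGroup N] [Module k N]

/-- The right `A`-action on `A^{⊗n} ⊗ M`: `(a^1 ⊗ ⋯ ⊗ a^n ⊗ m)·b = a^1 ⊗ ⋯ ⊗ a^n ⊗ m·b`. -/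
def rActDm (ωMr : M ⊗[k] A →ₗ[k] M) (n : ℕ) :
    (Dm k A M n) ⊗[k] A →ₗ[k] Dm k A M n :=
  (TensorProduct.map (LinearMap.id : (Pk k A n : Type) →ₗ[k] _) ωMr).comp
    (TensorProduct.assoc k (Pk k A n : Type) M A).toLinearMap

/-- `f : A^{⊗n} ⊗ M → N ⊗ A^{⊗p}` is right `A`-linear for the structures of the paper
(the diagonal right action `(x ⊗ a^1 ⊗ ⋯ ⊗ a^p)·b = Σ x·b_1 ⊗ a^1 b_2 ⊗ ⋯ ⊗ a^p b_{p+1}`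
on the codomain). -/
def IsRightLinear (ωMr : M ⊗[k] A →ₗ[k] M) (ωNr : N ⊗[k] A →ₗ[k] N) (n p : ℕ)
    (f : Yc k A M N n p) : Prop :=
  f.comp (rActDm k A ωMr n) =
    (rdiagAct k A ωNr p).comp (TensorProduct.map f (LinearMap.id : A →ₗ[k] A))

/-- `(M, ωMr)` is a right `A`-module. -/
def IsModuleR (ωMr : M ⊗[k] A →ₗ[k] M) : Prop :=
  (∀ m : M, ωMr (m ⊗ₜ (1 : A)) = m) ∧
  ∀ (m : M) (a b : A), ωMr (ωMr (m ⊗ₜ a) ⊗ₜ b) = ωMr (m ⊗ₜ (a * b))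

/-- Bimodule compatibility: `(a·m)·b = a·(m·b)`. -/
def IsBimodule (ωM : A ⊗[k] M →ₗ[k] M) (ωMr : M ⊗[k] A →ₗ[k] M) : Prop :=
  ∀ (a b : A) (m : M), ωMr (ωM (a ⊗ₜ m) ⊗ₜ b) = ωM (a ⊗ₜ ωMr (m ⊗ₜ b))

/-- Right-right Hopf-module compatibility: `ρ(m·a) = Σ m_0·a_1 ⊗ m_1 a_2`. -/
def IsHopfRR (ωMr : M ⊗[k] A →ₗ[k] M) (ρM : M →ₗ[k] M ⊗[k] A) : Prop :=
  ρM.comp ωMr =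
    (TensorProduct.map ωMr (μA k A)).comp
      (((TensorProduct.tensorTensorTensorComm k M A A A).toLinearMap).comp
        (TensorProduct.map ρM (ΔA k A)))

/-- `M` is an object of `A_{lr}^r`: a bimodule which is a left-right and a
right-right Hopf module. -/
def IsLRRObject (ωM : A ⊗[k] M →ₗ[k] M) (ωMr : M ⊗[k] A →ₗ[k] M)
    (ρM : M →ₗ[k] M ⊗[k] A) : Prop :=
  IsModule k A ωM ∧ IsModuleR k A ωMr ∧ IsBimodule k A ωM ωMr ∧
    IsComodule k A ρM ∧ ρM.comp ωM = hopfRHS k A ωM ρM ∧ IsHopfRR k A ωMr ρM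

/-- The left `A`-coaction on `A^{⊗n} ⊗ M`:
`a^1 ⊗ ⋯ ⊗ a^n ⊗ m ↦ Σ (a^1)_1 ⋯ (a^n)_1 m_{(-1)} ⊗ (a^1)_2 ⊗ ⋯ ⊗ (a^n)_2 ⊗ m_{(0)}`. -/
def lcoDm (ρMl : M →ₗ[k] A ⊗[k] M) (n : ℕ) :
    Dm k A M n →ₗ[k] A ⊗[k] Dm k A M n :=
  (TensorProduct.map (μA k A)
      (LinearMap.id : ((Pk k A n : Type) ⊗[k] M) →ₗ[k] _)).comp <|
    ((TensorProduct.tensorTensorTensorComm k A (Pk k A n : Type) A M).toLinearMap).comp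
      (TensorProduct.map (dL k A n) ρMl)

/-- `f : A^{⊗n} ⊗ M → N ⊗ A^{⊗p}` is left `A`-colinear for the structures of the paper
(the coaction `x ⊗ a^1 ⊗ ⋯ ⊗ a^p ↦ Σ x_{(-1)} ⊗ x_{(0)} ⊗ a^1 ⊗ ⋯ ⊗ a^p` on the
codomain). -/
def IsLeftColinear (ρMl : M →ₗ[k] A ⊗[k] M) (ρNl : N →ₗ[k] A ⊗[k] N) (n p : ℕ)
    (f : Yc k A M N n p) : Prop :=
  (lcoBase k A ρNl p).comp f =
    (TensorProduct.map (LinearMap.id : A →ₗ[k] A) f).comp (lcoDm k A ρMl n)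

/-- `(M, ρMl)` is a left `A`-comodule. -/
def IsComoduleL (ρMl : M →ₗ[k] A ⊗[k] M) : Prop :=
  ((TensorProduct.lid k M).toLinearMap.comp
      ((TensorProduct.map (εA k A) (LinearMap.id : M →ₗ[k] M)).comp ρMl) =
    LinearMap.id) ∧
  (TensorProduct.map (ΔA k A) (LinearMap.id : M →ₗ[k] M)).comp ρMl =
    ((TensorProduct.assoc k A A M).symm.toLinearMap).comp
      ((TensorProduct.map (LinearMap.id : A →ₗ[k] A) ρMl).comp ρMl)

/-- `M` is an `A`-bicomodule:
`Σ m_{(-1)} ⊗ (m_{(0)})_0 ⊗ (m_{(0)})_1 = Σ (m_0)_{(-1)} ⊗ (m_0)_{(0)} ⊗ m_1`. -/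
def IsBicomodule (ρMl : M →ₗ[k] A ⊗[k] M) (ρM : M →ₗ[k] M ⊗[k] A) : Prop :=
  (TensorProduct.map (LinearMap.id : A →ₗ[k] A) ρM).comp ρMl =
    ((TensorProduct.assoc k A M A).toLinearMap).comp
      ((TensorProduct.map ρMl (LinearMap.id : A →ₗ[k] A)).comp ρM)

/-- Left-left Hopf-module compatibility: `ρ^l(a·m) = Σ a_1 m_{(-1)} ⊗ a_2·m_{(0)}`. -/
def IsHopfLL (ωM : A ⊗[k] M →ₗ[k] M) (ρMl : M →ₗ[k] A ⊗[k] M) : Prop :=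
  ρMl.comp ωM =
    (TensorProduct.map (μA k A) ωM).comp
      (((TensorProduct.tensorTensorTensorComm k A A A M).toLinearMap).comp
        (TensorProduct.map (ΔA k A) ρMl))

/-- Right-left Hopf-module compatibility: `ρ^l(m·a) = Σ m_{(-1)} a_1 ⊗ m_{(0)}·a_2`. -/
def IsHopfRL (ωMr : M ⊗[k] A →ₗ[k] M) (ρMl : M →ₗ[k] A ⊗[k] M) : Prop :=
  ρMl.comp ωMr =
    (TensorProduct.map (μA k A) ωMr).comp
      (((TensorProduct.tensorTensorTensorComm k A M A A).toLinearMap).comp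
        (TensorProduct.map ρMl (ΔA k A)))

/-- `M` is an object of `A_l^{lr}`: a bicomodule which is a left-left and a
left-right Hopf module. -/
def IsLLRObject (ωM : A ⊗[k] M →ₗ[k] M) (ρMl : M →ₗ[k] A ⊗[k] M)
    (ρM : M →ₗ[k] M ⊗[k] A) : Prop :=
  IsModule k A ωM ∧ IsComoduleL k A ρMl ∧ IsComodule k A ρM ∧
    IsBicomodule k A ρMl ρM ∧ IsHopfLL k A ωM ρMl ∧
    ρM.comp ωM = hopfRHS k A ωM ρM

/-- `M` is a Hopf bimodule (two-sided two-cosided Hopf module) over `A`. -/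
def IsHopfBimodule (ωM : A ⊗[k] M →ₗ[k] M) (ωMr : M ⊗[k] A →ₗ[k] M)
    (ρMl : M →ₗ[k] A ⊗[k] M) (ρM : M →ₗ[k] M ⊗[k] A) : Prop :=
  IsModule k A ωM ∧ IsModuleR k A ωMr ∧ IsBimodule k A ωM ωMr ∧
    IsComoduleL k A ρMl ∧ IsComodule k A ρM ∧ IsBicomodule k A ρMl ρM ∧
    IsHopfLL k A ωM ρMl ∧ ρM.comp ωM = hopfRHS k A ωM ρM ∧
    IsHopfRL k A ωMr ρMl ∧ IsHopfRR k A ωMr ρM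

end Bimod


/-! Every face and coface of `f` is `f` composed, on either side, with maps that commute with
the right `A`-actions, so it suffices to know that these building blocks are equivariant.
The action on `N ⊗ A^{⊗p}` is the iterated diagonal action `(x ⊗ t)·b = Σ x·b₁ ⊗ t b₂`, and
diagonal actions are functorial: `φ ⊗ id_A` is equivariant when `φ` is, `id ⊗ Δ` is equivariant
because `Δ` is multiplicative and coassociative, and the diagonal left action commutes with the
diagonal right action when the two actions on `N` commute. The bimodule axioms of `M` and `N`
handle `b_0` and `b_{n+1}`; the right-right Hopf condition, which says exactly that `ρ` is
`A`-linear into `M ⊗ A` with the diagonal action, handles `c_0` and `c_{p+1}`. Finally the right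
`A`-linear maps form a subspace, which contains the alternating sums `d_m f` and `d_c f`. -/

section Equivariant

open Coalgebra

variable {P Q X Y Z : Type} [AddCommGroup P] [Module k P] [AddCommGroup Q] [Module k Q]
  [AddCommGroup X] [Module k X] [AddCommGroup Y] [Module k Y] [AddCommGroup Z] [Module k Z]

def RightEquivariant (ωX : X ⊗[k] A →ₗ[k] X) (ωY : Y ⊗[k] A →ₗ[k] Y) (φ : X →ₗ[k] Y) : Prop :=
  ∀ x b, φ (ωX (x ⊗ₜ b)) = ωY (φ x ⊗ₜ b)

def sndAct (P : Type) [AddCommGroup P] [Module k P] (ω : X ⊗[k] A →ₗ[k] X) :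
    (P ⊗[k] X) ⊗[k] A →ₗ[k] P ⊗[k] X :=
  ω.lTensor P ∘ₗ (TensorProduct.assoc k P X A).toLinearMap

def diagAct (ω : X ⊗[k] A →ₗ[k] X) : (X ⊗[k] A) ⊗[k] A →ₗ[k] X ⊗[k] A :=
  TensorProduct.map ω (μA k A) ∘ₗ (TensorProduct.tensorTensorTensorComm k X A A A).toLinearMap ∘ₗ
    (ΔA k A).lTensor (X ⊗[k] A)

def leftDiagAct (α : A ⊗[k] X →ₗ[k] X) : A ⊗[k] (X ⊗[k] A) →ₗ[k] X ⊗[k] A :=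
  TensorProduct.map α (μA k A) ∘ₗ (TensorProduct.tensorTensorTensorComm k A A X A).toLinearMap ∘ₗ
    (ΔA k A).rTensor (X ⊗[k] A)

variable {k A}

@[simp]
lemma sndAct_tmul (ω : X ⊗[k] A →ₗ[k] X) (u : P) (x : X) (b : A) :
    sndAct k A P ω ((u ⊗ₜ x) ⊗ₜ b) = u ⊗ₜ ω (x ⊗ₜ b) := rfl

lemma RightEquivariant.id (ω : X ⊗[k] A →ₗ[k] X) : RightEquivariant k A ω ω LinearMap.id :=
  fun _ _ => rfl

lemma RightEquivariant.comp {ωX : X ⊗[k] A →ₗ[k] X} {ωY : Y ⊗[k] A →ₗ[k] Y}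
    {ωZ : Z ⊗[k] A →ₗ[k] Z} {ψ : Y →ₗ[k] Z} {φ : X →ₗ[k] Y}
    (hψ : RightEquivariant k A ωY ωZ ψ) (hφ : RightEquivariant k A ωX ωY φ) :
    RightEquivariant k A ωX ωZ (ψ ∘ₗ φ) := fun x b => by
  rw [LinearMap.comp_apply, hφ, hψ, LinearMap.comp_apply]

lemma RightEquivariant.map {ωX : X ⊗[k] A →ₗ[k] X} {ωY : Y ⊗[k] A →ₗ[k] Y} {φ : X →ₗ[k] Y}
    (g : P →ₗ[k] Q) (hφ : RightEquivariant k A ωX ωY φ) :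
    RightEquivariant k A (sndAct k A P ωX) (sndAct k A Q ωY) (TensorProduct.map g φ) := by
  intro z b
  induction z using TensorProduct.induction_on with
  | zero => simp
  | add z z' h h' => simp only [map_add, add_tmul, h, h']
  | tmul u x => simp [hφ x b]

lemma rightEquivariant_assoc (ω : X ⊗[k] A →ₗ[k] X) :
    RightEquivariant k A (sndAct k A (P ⊗[k] Q) ω) (sndAct k A P (sndAct k A Q ω))
      (TensorProduct.assoc k P Q X).toLinearMap := by
  intro z b
  induction z using TensorProduct.induction_on with
  | zero => simp
  | add z z' h h' => simp only [map_add, add_tmul, h, h']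
  | tmul u x =>
    induction u using TensorProduct.induction_on with
    | zero => simp
    | add u u' h h' => simp only [map_add, add_tmul, h, h']
    | tmul u v => simp

lemma diagAct_tmul (ω : X ⊗[k] A →ₗ[k] X) (x : X) (t b : A) :
    diagAct k A ω ((x ⊗ₜ t) ⊗ₜ b) =
      ∑ i ∈ (ℛ k b).index, ω (x ⊗ₜ (ℛ k b).left i) ⊗ₜ (t * (ℛ k b).right i) := by
  simp [diagAct, ← (ℛ k b).eq, tmul_sum, map_sum]

lemma leftDiagAct_tmul (α : A ⊗[k] X →ₗ[k] X) (a : A) (x : X) (t : A) :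
    leftDiagAct k A α (a ⊗ₜ (x ⊗ₜ t)) =
      ∑ i ∈ (ℛ k a).index, α ((ℛ k a).left i ⊗ₜ x) ⊗ₜ ((ℛ k a).right i * t) := by
  simp [leftDiagAct, ← (ℛ k a).eq, sum_tmul, map_sum]

lemma RightEquivariant.rTensor {ωX : X ⊗[k] A →ₗ[k] X} {ωY : Y ⊗[k] A →ₗ[k] Y} {φ : X →ₗ[k] Y}
    (hφ : RightEquivariant k A ωX ωY φ) :
    RightEquivariant k A (diagAct k A ωX) (diagAct k A ωY) (φ.rTensor A) := by
  intro z b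
  induction z using TensorProduct.induction_on with
  | zero => simp
  | add z z' h h' => simp only [map_add, add_tmul, h, h']
  | tmul x t => simp [diagAct_tmul, map_sum, hφ _ _]

lemma RightEquivariant.leftDiagAct {ω : X ⊗[k] A →ₗ[k] X} {α : A ⊗[k] X →ₗ[k] X}
    (h : RightEquivariant k A (sndAct k A A ω) ω α) :
    RightEquivariant k A (sndAct k A A (diagAct k A ω)) (diagAct k A ω) (leftDiagAct k A α) := by
  intro z b
  induction z using TensorProduct.induction_on with
  | zero => simp
  | add z z' h h' => simp only [map_add, add_tmul, h, h']
  | tmul a y =>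
    induction y using TensorProduct.induction_on with
    | zero => simp
    | add y y' h h' => simp only [map_add, add_tmul, tmul_add, h, h']
    | tmul x t =>
      have h' (a : A) (x : X) (b : A) : α (a ⊗ₜ ω (x ⊗ₜ b)) = ω (α (a ⊗ₜ x) ⊗ₜ b) := by
        simpa using h (a ⊗ₜ x) b
      simp only [sndAct_tmul, diagAct_tmul, leftDiagAct_tmul, map_sum, tmul_sum, sum_tmul, h',
        mul_assoc]
      exact Finset.sum_comm

lemma rightEquivariant_lTensor_comul (ω : X ⊗[k] A →ₗ[k] X) :
    RightEquivariant k A (diagAct k A ω) (diagAct k A (diagAct k A ω))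
      ((TensorProduct.assoc k X A A).symm.toLinearMap ∘ₗ (ΔA k A).lTensor X) := by
  intro z b
  induction z using TensorProduct.induction_on with
  | zero => simp
  | add z z' h h' => simp only [map_add, add_tmul, h, h']
  | tmul x t =>
    simp only [diagAct_tmul, map_sum, LinearMap.comp_apply, LinearMap.lTensor_tmul,
      Bialgebra.comul_mul]
    generalize ΔA k A t = s
    induction s using TensorProduct.induction_on with
    | zero => simp
    | add s s' h h' =>
      simp only [add_mul, tmul_add, map_add, add_tmul, Finset.sum_add_distrib, h, h']
    | tmul t₁ t₂ =>
      -- both sides are the images of the two sides of coassociativity for `Δ b`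
      have := congrArg (TensorProduct.map (TensorProduct.map (ω ∘ₗ TensorProduct.mk k X A x)
          (LinearMap.mulLeft k t₁)) (LinearMap.mulLeft k t₂) ∘ₗ
          (TensorProduct.assoc k A A A).symm.toLinearMap)
        (sum_tmul_tmul_eq (ℛ k b) (fun i => ℛ k _) (fun i => ℛ k _))
      simpa [map_sum, diagAct_tmul, ← (ℛ k _).eq, Finset.mul_sum, tmul_sum, sum_tmul]
        using this.symm

lemma RightEquivariant.map_mul_tensorTensorTensorComm {ωX : X ⊗[k] A →ₗ[k] X}
    {ωY : Y ⊗[k] A →ₗ[k] Y} {f : P ⊗[k] X →ₗ[k] Y}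
    (hf : RightEquivariant k A (sndAct k A P ωX) ωY f) :
    RightEquivariant k A (sndAct k A (P ⊗[k] A) (diagAct k A ωX)) (diagAct k A ωY)
      (TensorProduct.map f (μA k A) ∘ₗ
        (TensorProduct.tensorTensorTensorComm k P A X A).toLinearMap) := by
  have hf' (u : P) (x : X) (b : A) : f (u ⊗ₜ ωX (x ⊗ₜ b)) = ωY (f (u ⊗ₜ x) ⊗ₜ b) := by
    simpa using hf (u ⊗ₜ x) b
  intro z b
  induction z using TensorProduct.induction_on with
  | zero => simp
  | add z z' h h' => simp only [map_add, add_tmul, h, h']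
  | tmul w y =>
    induction w using TensorProduct.induction_on with
    | zero => simp
    | add w w' h h' => simp only [map_add, add_tmul, h, h']
    | tmul u a =>
      induction y using TensorProduct.induction_on with
      | zero => simp
      | add y y' h h' => simp only [map_add, add_tmul, tmul_add, h, h']
      | tmul x t => simp [diagAct_tmul, tmul_sum, map_sum, hf', mul_assoc]

end Equivariant

/- `rdiagAct`, `ldiag`, `rhoBase`, `shiftB` and `comulAt` at `p + 1` are definitionally the
corresponding diagonal constructions on `(·) ⊗ A` applied to their value at `p`, so each
induction step is an instance of the lemmas above. -/
section HopfModules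

variable {k A} {M N : Type} [AddCommGroup M] [Module k M] [AddCommGroup N] [Module k N]

lemma IsHopfRR.rightEquivariant {ωMr : M ⊗[k] A →ₗ[k] M} {ρM : M →ₗ[k] M ⊗[k] A}
    (h : IsHopfRR k A ωMr ρM) : RightEquivariant k A ωMr (diagAct k A ωMr) ρM :=
  fun m b => LinearMap.congr_fun h (m ⊗ₜ b)

lemma IsBimodule.rightEquivariant {ωM : A ⊗[k] M →ₗ[k] M} {ωMr : M ⊗[k] A →ₗ[k] M}
    (h : IsBimodule k A ωM ωMr) : RightEquivariant k A (sndAct k A A ωMr) ωMr ωM := by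
  intro z b
  induction z using TensorProduct.induction_on with
  | zero => simp
  | add z z' h h' => simp only [map_add, add_tmul, h, h']
  | tmul a m => exact (h a b m).symm

lemma rhoBase_rightEquivariant {ωNr : N ⊗[k] A →ₗ[k] N} {ρN : N →ₗ[k] N ⊗[k] A}
    (h : IsHopfRR k A ωNr ρN) (p : ℕ) :
    RightEquivariant k A (rdiagAct k A ωNr p) (rdiagAct k A (diagAct k A ωNr) p)
      (rhoBase k A ρN p) := by
  induction p with
  | zero => exact h.rightEquivariant
  | succ p ih => exact ih.rTensor

lemma shiftB_rightEquivariant (ωNr : N ⊗[k] A →ₗ[k] N) (p : ℕ) :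
    RightEquivariant k A (rdiagAct k A (diagAct k A ωNr) p) (rdiagAct k A ωNr (p + 1))
      (shiftB k A p).toLinearMap := by
  induction p with
  | zero => exact RightEquivariant.id _
  | succ p ih => exact ih.rTensor

lemma comulAt_rightEquivariant (ωNr : N ⊗[k] A →ₗ[k] N) (p j : ℕ) :
    RightEquivariant k A (rdiagAct k A ωNr p) (rdiagAct k A ωNr (p + 1)) (comulAt k A p j) := by
  induction p with
  | zero => intro x b; simp [comulAt]
  | succ p ih =>
    by_cases hj : j = p + 1
    · subst hj
      erw [comulAt, if_pos rfl]
      exact rightEquivariant_lTensor_comul (rdiagAct k A ωNr p)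
    · erw [comulAt, if_neg hj]
      exact ih.rTensor

lemma ldiag_rightEquivariant {ωN : A ⊗[k] N →ₗ[k] N} {ωNr : N ⊗[k] A →ₗ[k] N}
    (h : IsBimodule k A ωN ωNr) (p : ℕ) :
    RightEquivariant k A (sndAct k A A (rdiagAct k A ωNr p)) (rdiagAct k A ωNr p)
      (ldiag k A ωN p) := by
  induction p with
  | zero => exact h.rightEquivariant
  | succ p ih => exact ih.leftDiagAct

end HopfModules

section RightLinear

variable {k A} {M N : Type} [AddCommGroup M] [Module k M] [AddCommGroup N] [Module k N]
  {ωM : A ⊗[k] M →ₗ[k] M} {ωMr : M ⊗[k] A →ₗ[k] M} {ρM : M →ₗ[k] M ⊗[k] A}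
  {ωN : A ⊗[k] N →ₗ[k] N} {ωNr : N ⊗[k] A →ₗ[k] N} {ρN : N →ₗ[k] N ⊗[k] A}

def rightLinearSubmodule (ωMr : M ⊗[k] A →ₗ[k] M) (ωNr : N ⊗[k] A →ₗ[k] N) (n p : ℕ) :
    Submodule k (Yc k A M N n p) :=
  LinearMap.eqLocus (LinearMap.lcomp k _ (rActDm k A ωMr n))
    (LinearMap.llcomp k _ _ _ (rdiagAct k A ωNr p) ∘ₗ LinearMap.rTensorHom A)

lemma mem_rightLinearSubmodule {n p : ℕ} {f : Yc k A M N n p} :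
    f ∈ rightLinearSubmodule ωMr ωNr n p ↔ IsRightLinear k A ωMr ωNr n p f := Iff.rfl

lemma isRightLinear_iff_rightEquivariant {n p : ℕ} {f : Yc k A M N n p} :
    IsRightLinear k A ωMr ωNr n p f ↔
      RightEquivariant k A (rActDm k A ωMr n) (rdiagAct k A ωNr p) f :=
  ⟨fun h x b => LinearMap.congr_fun h (x ⊗ₜ b), fun h => TensorProduct.ext' h⟩

lemma isRightLinear_bH (hM : IsBimodule k A ωM ωMr) (hN : IsBimodule k A ωN ωNr) {n p : ℕ}
    {f : Yc k A M N n p} (hf : IsRightLinear k A ωMr ωNr n p f) (i : ℕ) :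
    IsRightLinear k A ωMr ωNr (n + 1) p (bH k A ωM ωN n p i f) := by
  rw [isRightLinear_iff_rightEquivariant] at hf ⊢
  unfold bH
  split_ifs
  · exact (ldiag_rightEquivariant hN p).comp <| (RightEquivariant.map LinearMap.id hf).comp <|
      (rightEquivariant_assoc ωMr).comp <|
        RightEquivariant.map (insP k A n).symm.toLinearMap (RightEquivariant.id ωMr)
  · exact hf.comp (RightEquivariant.map (mulP k A n i) (RightEquivariant.id ωMr))
  · exact hf.comp <| (RightEquivariant.map LinearMap.id hM.rightEquivariant).comp <|
      rightEquivariant_assoc ωMr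

lemma isRightLinear_cH (hM : IsHopfRR k A ωMr ρM) (hN : IsHopfRR k A ωNr ρN) {n p : ℕ}
    {f : Yc k A M N n p} (hf : IsRightLinear k A ωMr ωNr n p f) (j : ℕ) :
    IsRightLinear k A ωMr ωNr n (p + 1) (cH k A ρM ρN n p j f) := by
  rw [isRightLinear_iff_rightEquivariant] at hf ⊢
  unfold cH
  split_ifs
  · exact (shiftB_rightEquivariant ωNr p).comp ((rhoBase_rightEquivariant hN p).comp hf)
  · exact (comulAt_rightEquivariant ωNr p j).comp hf
  · exact hf.map_mul_tensorTensorTensorComm.comp <|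
      RightEquivariant.map (dR k A n) hM.rightEquivariant

end RightLinear

/-- For `M, N` in `A_{lr}^r`, the subspaces
`R^{n,p}(M,N) = Hom_{mod-A}(A^{⊗n} ⊗ M, N ⊗ A^{⊗p})` of right `A`-linear maps are
preserved by the differentials of the Hopf-module bicomplex, so
`(R^{n,p}(M,N), d_m, d_c)` is a double complex. -/
theorem right_linear_preserved (k : Type) [Field k] (A : Type) [Ring A] [Bialgebra k A]
    (M N : Type) [AddCommGroup M] [Module k M] [AddCommGroup N] [Module k N]
    (ωM : A ⊗[k] M →ₗ[k] M) (ωMr : M ⊗[k] A →ₗ[k] M) (ρM : M →ₗ[k] M ⊗[k] A)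
    (ωN : A ⊗[k] N →ₗ[k] N) (ωNr : N ⊗[k] A →ₗ[k] N) (ρN : N →ₗ[k] N ⊗[k] A)
    (hM : IsLRRObject k A ωM ωMr ρM) (hN : IsLRRObject k A ωN ωNr ρN)
    (n p : ℕ) (f : Yc k A M N n p)
    (hf : IsRightLinear k A ωMr ωNr n p f) :
    IsRightLinear k A ωMr ωNr (n+1) p (dmH k A ωM ωN n p f) ∧
    IsRightLinear k A ωMr ωNr n (p+1) (dcH k A ρM ρN n p f) := by
  obtain ⟨-, -, hMbimod, -, -, hMhopf⟩ := hM
  obtain ⟨-, -, hNbimod, -, -, hNhopf⟩ := hN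
  constructor
  · refine mem_rightLinearSubmodule.mp (Submodule.sum_mem _ fun i _ => zsmul_mem ?_ _)
    exact isRightLinear_bH hMbimod hNbimod hf i
  · refine mem_rightLinearSubmodule.mp (Submodule.sum_mem _ fun j _ => zsmul_mem ?_ _)
    exact isRightLinear_cH hMhopf hNhopf hf j

end PS
end
end

section
/- Let A be a bialgebra and M, N objects of the category A_l^{lr} (bicomodules over A that are simultaneously left-left and left-right Hopf modules). Endow A^n⊗M with the left A-comodule structure a^1⊗...⊗a^n⊗m ↦ Σ (a^1)_1...(a^n)_1 m_{(-1)} ⊗ (a^1)_2⊗...⊗(a^n)_2⊗m_{(0)}, and N⊗A^p with the left A-comodule structure x⊗a^1⊗...⊗a^p ↦ Σ x_{(-1)} ⊗ x_{(0)}⊗a^1⊗...⊗a^p. Then the subspaces L^{n,p}(M,N) = Hom^{A-comod}(A^n⊗M, N⊗A^p) of left A-comodule maps are preserved by the Hopf-module bicomplex differentials: d_m(L^{n,p}) ⊆ L^{n+1,p} and d_c(L^{n,p}) ⊆ L^{n,p+1}, so (L^{n,p}(M,N), d_m, d_c) is a double complex. -/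
/-! Give `A^{⊗n} ⊗ M` and `N ⊗ A^{⊗p}` their diagonal left coactions. Colinear maps are closed
under composition, sums, tensor products and the structural isomorphisms of the tensor product,
and every face and coface of the Hopf-module bicomplex is built by these operations from a few
basic colinear maps: the multiplication `A ⊗ A → A` (the comultiplication is multiplicative), the
comultiplication `A → A ⊗ A` (coassociativity), the actions `A ⊗ M → M`, `A ⊗ N → N` (the
left-left Hopf condition) and the right coactions `M → M ⊗ A`, `N → N ⊗ A` (the bicomodule
condition). -/

open TensorProduct
noncomputable section

namespace PS

variable (k : Type) [Field k] (A : Type) [Ring A] [Bialgebra k A]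

section Coaction

variable {k A}
variable {X Y Z W W' X' Y' : Type}
  [AddCommGroup X] [Module k X] [AddCommGroup Y] [Module k Y] [AddCommGroup Z] [Module k Z]
  [AddCommGroup W] [Module k W] [AddCommGroup W'] [Module k W']
  [AddCommGroup X'] [Module k X'] [AddCommGroup Y'] [Module k Y']

def IsColinear (lX : X →ₗ[k] A ⊗[k] X) (lY : Y →ₗ[k] A ⊗[k] Y) (f : X →ₗ[k] Y) : Prop :=
  lY ∘ₗ f = f.lTensor A ∘ₗ lX

/-- The coaction `x ⊗ y ↦ Σ x₍₋₁₎ y₍₋₁₎ ⊗ x₍₀₎ ⊗ y₍₀₎`. -/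
def tensorCoaction (lX : X →ₗ[k] A ⊗[k] X) (lY : Y →ₗ[k] A ⊗[k] Y) :
    X ⊗[k] Y →ₗ[k] A ⊗[k] (X ⊗[k] Y) :=
  (μA k A).rTensor _ ∘ₗ (tensorTensorTensorComm k A X A Y).toLinearMap ∘ₗ map lX lY

def rTensorCoaction (lX : X →ₗ[k] A ⊗[k] X) (W : Type) [AddCommGroup W] [Module k W] :
    X ⊗[k] W →ₗ[k] A ⊗[k] (X ⊗[k] W) :=
  (TensorProduct.assoc k A X W).toLinearMap ∘ₗ lX.rTensor W

/-- The right coaction `x ⊗ y ↦ Σ x₀ ⊗ y₀ ⊗ x₁ y₁`. -/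
def tensorRightCoaction (rX : X →ₗ[k] X ⊗[k] A) (rY : Y →ₗ[k] Y ⊗[k] A) :
    X ⊗[k] Y →ₗ[k] (X ⊗[k] Y) ⊗[k] A :=
  (μA k A).lTensor _ ∘ₗ (tensorTensorTensorComm k X A Y A).toLinearMap ∘ₗ map rX rY

variable {lX : X →ₗ[k] A ⊗[k] X} {lY : Y →ₗ[k] A ⊗[k] Y} {lZ : Z →ₗ[k] A ⊗[k] Z}
  {lX' : X' →ₗ[k] A ⊗[k] X'} {lY' : Y' →ₗ[k] A ⊗[k] Y'}

namespace IsColinear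

theorem id : IsColinear lX lX LinearMap.id := by
  simp [IsColinear]

theorem zero : IsColinear lX lY 0 := by
  simp [IsColinear]

theorem comp {f : X →ₗ[k] Y} {g : Y →ₗ[k] Z} (hf : IsColinear lX lY f)
    (hg : IsColinear lY lZ g) : IsColinear lX lZ (g ∘ₗ f) := by
  unfold IsColinear at *
  rw [← LinearMap.comp_assoc, hg, LinearMap.comp_assoc, hf, LinearMap.lTensor_comp,
    LinearMap.comp_assoc]

theorem symm {e : X ≃ₗ[k] Y} (he : IsColinear lX lY e.toLinearMap) :
    IsColinear lY lX e.symm.toLinearMap := by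
  unfold IsColinear at *
  ext y
  have h := LinearMap.congr_fun he (e.symm y)
  simp only [LinearMap.comp_apply, LinearEquiv.coe_coe, LinearEquiv.apply_symm_apply] at h
  simp [h, ← LinearMap.lTensor_comp_apply]

theorem tensorMap {f : X →ₗ[k] X'} {g : Y →ₗ[k] Y'} (hf : IsColinear lX lX' f)
    (hg : IsColinear lY lY' g) :
    IsColinear (tensorCoaction lX lY) (tensorCoaction lX' lY') (TensorProduct.map f g) := by
  have h : TensorProduct.map lX' lY' ∘ₗ TensorProduct.map f g =
      TensorProduct.map (f.lTensor A) (g.lTensor A) ∘ₗ TensorProduct.map lX lY := by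
    rw [← map_comp, hf, hg, map_comp]
  simp only [IsColinear, tensorCoaction, LinearMap.comp_assoc, h]
  simp only [← LinearMap.comp_assoc]
  congr 1
  ext a x b y
  simp

theorem rTensorCoaction_map {g : X →ₗ[k] Y} (hg : IsColinear lX lY g) (h : W →ₗ[k] W') :
    IsColinear (rTensorCoaction lX W) (rTensorCoaction lY W') (TensorProduct.map g h) := by
  unfold IsColinear at *
  simp only [rTensorCoaction, LinearMap.comp_assoc, LinearMap.rTensor_comp_map, hg,
    ← LinearMap.map_comp_rTensor]
  simp only [← LinearMap.comp_assoc]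
  congr 1
  ext
  simp

end IsColinear

variable (lX lY) in
def colinearMaps : AddSubgroup (X →ₗ[k] Y) where
  carrier := {f | IsColinear lX lY f}
  add_mem' {f g} hf hg := by
    simp only [Set.mem_ofPred_eq, IsColinear, LinearMap.comp_add, LinearMap.lTensor_add,
      LinearMap.add_comp] at *
    rw [hf, hg]
  zero_mem' := IsColinear.zero
  neg_mem' {f} hf := by
    simp only [Set.mem_ofPred_eq, IsColinear, LinearMap.comp_neg, LinearMap.lTensor_neg,
      LinearMap.neg_comp] at *
    rw [hf]

theorem isColinear_assoc :
    IsColinear (tensorCoaction (tensorCoaction lX lY) lZ) (tensorCoaction lX (tensorCoaction lY lZ))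
      (TensorProduct.assoc k X Y Z).toLinearMap := by
  simp only [IsColinear, tensorCoaction, ← LinearMap.lTensor_comp_map,
    ← LinearMap.rTensor_comp_map, LinearMap.comp_assoc, map_map_comp_assoc_eq]
  simp only [← LinearMap.comp_assoc]
  congr 1
  ext
  simp [mul_assoc]

theorem isColinear_tensorTensorTensorComm :
    IsColinear (tensorCoaction (rTensorCoaction lX W) (rTensorCoaction lY W'))
      (rTensorCoaction (tensorCoaction lX lY) (W ⊗[k] W'))
      (tensorTensorTensorComm k X W Y W').toLinearMap := by
  have h : (map lX lY).rTensor (W ⊗[k] W') ∘ₗ (tensorTensorTensorComm k X W Y W').toLinearMap =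
      (tensorTensorTensorComm k (A ⊗[k] X) W (A ⊗[k] Y) W').toLinearMap ∘ₗ
        map (lX.rTensor W) (lY.rTensor W') := by
    ext x w y w'
    rfl
  simp only [IsColinear, tensorCoaction, rTensorCoaction, ← LinearMap.lTensor_comp_map,
    ← LinearMap.rTensor_comp_map, LinearMap.comp_assoc, LinearMap.rTensor_comp, h]
  simp only [← LinearMap.comp_assoc]
  congr 1
  ext
  simp

theorem isColinear_assoc_symm_rTensorCoaction :
    IsColinear (rTensorCoaction lX (W ⊗[k] W')) (rTensorCoaction (rTensorCoaction lX W) W')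
      (TensorProduct.assoc k X W W').symm.toLinearMap := by
  have h : (lX.rTensor W).rTensor W' ∘ₗ (TensorProduct.assoc k X W W').symm.toLinearMap =
      (TensorProduct.assoc k (A ⊗[k] X) W W').symm.toLinearMap ∘ₗ lX.rTensor (W ⊗[k] W') := by
    ext x w w'
    rfl
  simp only [IsColinear, rTensorCoaction, LinearMap.rTensor_comp, LinearMap.comp_assoc, h]
  simp only [← LinearMap.comp_assoc]
  congr 1
  ext
  simp

theorem IsColinear.lTensor_comp_assoc {lW : W →ₗ[k] A ⊗[k] W} {g : Y ⊗[k] Z →ₗ[k] W}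
    (hg : IsColinear (tensorCoaction lY lZ) lW g) :
    IsColinear (tensorCoaction (tensorCoaction lX lY) lZ) (tensorCoaction lX lW)
      (g.lTensor X ∘ₗ (TensorProduct.assoc k X Y Z).toLinearMap) :=
  isColinear_assoc.comp (IsColinear.id.tensorMap hg)

theorem IsColinear.tensorRightCoaction {rX : X →ₗ[k] X ⊗[k] A} {rY : Y →ₗ[k] Y ⊗[k] A}
    (hX : IsColinear lX (rTensorCoaction lX A) rX)
    (hY : IsColinear lY (rTensorCoaction lY A) rY) :
    IsColinear (tensorCoaction lX lY) (rTensorCoaction (tensorCoaction lX lY) A)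
      (tensorRightCoaction rX rY) :=
  ((hX.tensorMap hY).comp isColinear_tensorTensorTensorComm).comp
    (IsColinear.id.rTensorCoaction_map (μA k A))

end Coaction

section Bialgebra

variable {k A}
variable {V : Type} [AddCommGroup V] [Module k V]

theorem isColinear_mul : IsColinear (tensorCoaction (ΔA k A) (ΔA k A)) (ΔA k A) (μA k A) := by
  simp only [IsColinear, tensorCoaction, ← LinearMap.comp_assoc, LinearMap.lTensor_comp_rTensor,
    ← LinearMap.mul'_tensor]
  ext a b
  simp [Bialgebra.comul_mul]

theorem isColinear_comul : IsColinear (ΔA k A) (rTensorCoaction (ΔA k A) A) (ΔA k A) := by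
  simpa [IsColinear, rTensorCoaction, LinearMap.comp_assoc] using
    Coalgebra.coassoc (R := k) (A := A)

theorem IsHopfLL.isColinear {ω : A ⊗[k] V →ₗ[k] V} {ρ : V →ₗ[k] A ⊗[k] V}
    (h : IsHopfLL k A ω ρ) : IsColinear (tensorCoaction (ΔA k A) ρ) ρ ω := by
  unfold IsHopfLL at h
  simpa [IsColinear, tensorCoaction, ← LinearMap.comp_assoc] using h

theorem IsBicomodule.isColinear {ρl : V →ₗ[k] A ⊗[k] V} {ρr : V →ₗ[k] V ⊗[k] A}
    (h : IsBicomodule k A ρl ρr) : IsColinear ρl (rTensorCoaction ρl A) ρr :=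
  h.symm

end Bialgebra

section Cochains

variable {k A}
variable {N : Type} [AddCommGroup N] [Module k N]

theorem dL_succ (n : ℕ) : dL k A (n + 1) = tensorCoaction (dL k A n) (ΔA k A) := rfl

theorem lcoBase_succ (ρNl : N →ₗ[k] A ⊗[k] N) (p : ℕ) :
    lcoBase k A ρNl (p + 1) = rTensorCoaction (lcoBase k A ρNl p) A := rfl

-- The coaction `dL k A 0`, restated on `k` itself so that `simp` can evaluate it.
theorem isColinear_comm_unit :
    IsColinear
      (tensorCoaction (ΔA k A)
        ((Algebra.linearMap k A).rTensor k ∘ₗ (TensorProduct.lid k k).symm.toLinearMap))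
      (tensorCoaction ((Algebra.linearMap k A).rTensor k ∘ₗ (TensorProduct.lid k k).symm.toLinearMap)
        (ΔA k A))
      (TensorProduct.comm k A k).toLinearMap := by
  ext a
  simp only [tensorCoaction, AlgebraTensorModule.curry_apply, LinearMap.restrictScalars_self,
    curry_apply, LinearMap.coe_comp, LinearEquiv.coe_coe, Function.comp_apply, comm_tmul, map_tmul,
    lid_symm_apply, LinearMap.rTensor_tmul, Algebra.linearMap_apply, map_one]
  induction ΔA k A a using TensorProduct.induction_on <;> simp_all [add_tmul, tmul_add]

theorem isColinear_insP : ∀ n : ℕ,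
    IsColinear (tensorCoaction (ΔA k A) (dL k A n)) (dL k A (n + 1)) (insP k A n).toLinearMap
  | 0 => isColinear_comm_unit
  | n + 1 => by
    rw [dL_succ, dL_succ]
    exact isColinear_assoc.symm.comp ((isColinear_insP n).tensorMap IsColinear.id)

theorem isColinear_mulP : ∀ n i : ℕ, IsColinear (dL k A (n + 1)) (dL k A n) (mulP k A n i)
  | 0, _ => IsColinear.zero
  | n + 1, i => by
    by_cases hi : i = n + 1 <;> simp only [mulP, hi, ↓reduceIte] <;> rw [dL_succ, dL_succ]
    · exact isColinear_mul.lTensor_comp_assoc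
    · exact (isColinear_mulP n i).tensorMap IsColinear.id

theorem isColinear_dR : ∀ n : ℕ, IsColinear (dL k A n) (rTensorCoaction (dL k A n) A) (dR k A n)
  | 0 => by
    ext
    rfl
  | n + 1 => (isColinear_dR n).tensorRightCoaction isColinear_comul

theorem isColinear_ldiag {ωN : A ⊗[k] N →ₗ[k] N} {ρNl : N →ₗ[k] A ⊗[k] N}
    (h : IsHopfLL k A ωN ρNl) : ∀ p : ℕ,
    IsColinear (tensorCoaction (ΔA k A) (lcoBase k A ρNl p)) (lcoBase k A ρNl p) (ldiag k A ωN p)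
  | 0 => h.isColinear
  | p + 1 => by
    rw [lcoBase_succ]
    exact ((isColinear_comul.tensorMap IsColinear.id).comp isColinear_tensorTensorTensorComm).comp
      ((isColinear_ldiag h p).rTensorCoaction_map (μA k A))

theorem isColinear_comulAt (ρNl : N →ₗ[k] A ⊗[k] N) : ∀ p i : ℕ,
    IsColinear (lcoBase k A ρNl p) (lcoBase k A ρNl (p + 1)) (comulAt k A p i)
  | 0, _ => IsColinear.zero
  | p + 1, i => by
    by_cases hi : i = p + 1 <;> simp only [comulAt, hi, ↓reduceIte] <;>
      rw [lcoBase_succ, lcoBase_succ, lcoBase_succ]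
    · exact (IsColinear.id.rTensorCoaction_map (ΔA k A)).comp isColinear_assoc_symm_rTensorCoaction
    · exact (isColinear_comulAt ρNl p i).rTensorCoaction_map LinearMap.id

theorem isColinear_rhoBase {ρNl : N →ₗ[k] A ⊗[k] N} {ρN : N →ₗ[k] N ⊗[k] A}
    (h : IsColinear ρNl (rTensorCoaction ρNl A) ρN) : ∀ p : ℕ,
    IsColinear (lcoBase k A ρNl p) (lcoBase k A (rTensorCoaction ρNl A) p) (rhoBase k A ρN p)
  | 0 => h
  | p + 1 => by
    rw [lcoBase_succ, lcoBase_succ]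
    exact (isColinear_rhoBase h p).rTensorCoaction_map LinearMap.id

theorem isColinear_shiftB (ρNl : N →ₗ[k] A ⊗[k] N) : ∀ p : ℕ,
    IsColinear (lcoBase k A (rTensorCoaction ρNl A) p) (lcoBase k A ρNl (p + 1))
      (shiftB k A p).toLinearMap
  | 0 => IsColinear.id
  | p + 1 => by
    rw [lcoBase_succ, lcoBase_succ]
    exact (isColinear_shiftB ρNl p).rTensorCoaction_map LinearMap.id

end Cochains

section Differentials

variable {k A}
variable {M N : Type} [AddCommGroup M] [Module k M] [AddCommGroup N] [Module k N]
  {ωM : A ⊗[k] M →ₗ[k] M} {ρMl : M →ₗ[k] A ⊗[k] M} {ρM : M →ₗ[k] M ⊗[k] A}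
  {ωN : A ⊗[k] N →ₗ[k] N} {ρNl : N →ₗ[k] A ⊗[k] N} {ρN : N →ₗ[k] N ⊗[k] A}
  {n p : ℕ} {f : Yc k A M N n p}

theorem cofLast_eq_rTensor_comp :
    cofLast k A ρM n p f = f.rTensor A ∘ₗ tensorRightCoaction (dR k A n) ρM := by
  simp only [cofLast, tensorRightCoaction, ← LinearMap.comp_assoc,
    LinearMap.rTensor_comp_lTensor]
  rfl

theorem isColinear_bH (hM : IsHopfLL k A ωM ρMl) (hN : IsHopfLL k A ωN ρNl)
    (hf : IsColinear (lcoDm k A ρMl n) (lcoBase k A ρNl p) f) (i : ℕ) :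
    IsColinear (lcoDm k A ρMl (n + 1)) (lcoBase k A ρNl p) (bH k A ωM ωN n p i f) := by
  unfold bH
  split_ifs
  · exact ((((isColinear_insP n).symm.tensorMap IsColinear.id).comp isColinear_assoc).comp
      (IsColinear.id.tensorMap hf)).comp (isColinear_ldiag hN p)
  · exact ((isColinear_mulP n i).tensorMap IsColinear.id).comp hf
  · exact hM.isColinear.lTensor_comp_assoc.comp hf

theorem isColinear_cH (hM : IsBicomodule k A ρMl ρM) (hN : IsBicomodule k A ρNl ρN)
    (hf : IsColinear (lcoDm k A ρMl n) (lcoBase k A ρNl p) f) (j : ℕ) :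
    IsColinear (lcoDm k A ρMl n) (lcoBase k A ρNl (p + 1)) (cH k A ρM ρN n p j f) := by
  unfold cH
  split_ifs
  · exact (hf.comp (isColinear_rhoBase hN.isColinear p)).comp (isColinear_shiftB ρNl p)
  · exact hf.comp (isColinear_comulAt ρNl p j)
  · rw [cofLast_eq_rTensor_comp]
    exact ((isColinear_dR n).tensorRightCoaction hM.isColinear).comp
      (hf.rTensorCoaction_map LinearMap.id)

theorem isLeftColinear_dmH (hM : IsHopfLL k A ωM ρMl) (hN : IsHopfLL k A ωN ρNl)
    (hf : IsLeftColinear k A ρMl ρNl n p f) :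
    IsLeftColinear k A ρMl ρNl (n + 1) p (dmH k A ωM ωN n p f) :=
  AddSubgroup.sum_mem (colinearMaps _ _) fun i _ =>
    AddSubgroup.zsmul_mem _ (isColinear_bH hM hN hf i) _

theorem isLeftColinear_dcH (hM : IsBicomodule k A ρMl ρM) (hN : IsBicomodule k A ρNl ρN)
    (hf : IsLeftColinear k A ρMl ρNl n p f) :
    IsLeftColinear k A ρMl ρNl n (p + 1) (dcH k A ρM ρN n p f) :=
  AddSubgroup.sum_mem (colinearMaps _ _) fun j _ =>
    AddSubgroup.zsmul_mem _ (isColinear_cH hM hN hf j) _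

end Differentials

/-- For `M, N` in `A_l^{lr}`, the subspaces
`L^{n,p}(M,N) = Hom^{A-comod}(A^{⊗n} ⊗ M, N ⊗ A^{⊗p})` of left `A`-colinear maps are
preserved by the differentials of the Hopf-module bicomplex, so
`(L^{n,p}(M,N), d_m, d_c)` is a double complex. -/
theorem left_colinear_preserved (k : Type) [Field k] (A : Type) [Ring A] [Bialgebra k A]
    (M N : Type) [AddCommGroup M] [Module k M] [AddCommGroup N] [Module k N]
    (ωM : A ⊗[k] M →ₗ[k] M) (ρMl : M →ₗ[k] A ⊗[k] M) (ρM : M →ₗ[k] M ⊗[k] A)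
    (ωN : A ⊗[k] N →ₗ[k] N) (ρNl : N →ₗ[k] A ⊗[k] N) (ρN : N →ₗ[k] N ⊗[k] A)
    (hM : IsLLRObject k A ωM ρMl ρM) (hN : IsLLRObject k A ωN ρNl ρN)
    (n p : ℕ) (f : Yc k A M N n p)
    (hf : IsLeftColinear k A ρMl ρNl n p f) :
    IsLeftColinear k A ρMl ρNl (n+1) p (dmH k A ωM ωN n p f) ∧
    IsLeftColinear k A ρMl ρNl n (p+1) (dcH k A ρM ρN n p f) := by
  obtain ⟨-, -, -, hMbi, hMhopf, -⟩ := hM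
  obtain ⟨-, -, -, hNbi, hNhopf, -⟩ := hN
  exact ⟨isLeftColinear_dmH hMhopf hNhopf hf, isLeftColinear_dcH hMbi hNbi hf⟩

end PS
end
end
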